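/- Let P₆ = ⟨x, y | x⁶, y³, (xy)²⟩. The quotient of P₆ by the normal closure of the set {y x⁻², y⁻¹ x²} (its translation subgroup) is isomorphic to ℤ/6ℤ. -/

import Mathlib

/-- Relators of `P₆ = ⟨x, y | x⁶, y³, (xy)²⟩`, the fundamental group of `S²(2,3,6)`. -/
def relsP6 : Set (FreeGroup (Fin 2)) :=
  {(FreeGroup.of 0) ^ 6, (FreeGroup.of 1) ^ 3, (FreeGroup.of 0 * FreeGroup.of 1) ^ 2}

/-- `P₆ = ⟨x, y | x⁶, y³, (xy)²⟩`. -/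
abbrev P6 : Type := PresentedGroup relsP6

/-- The generator `x` of `P₆`. -/
def P6x : P6 := PresentedGroup.of 0

/-- The generator `y` of `P₆`. -/
def P6y : P6 := PresentedGroup.of 1

/-! Modulo the translations `y = x²`, so the quotient is cyclic, generated by the image of `x`,
whose order divides 6. The map `x ↦ 1, y ↦ 2` onto `ℤ/6` kills the translations, so that order is
exactly 6. -/

open Subgroup

namespace P6

abbrev translationClosure : Subgroup P6 :=
  normalClosure {P6y * (P6x * P6x)⁻¹, P6y⁻¹ * (P6x * P6x)}

abbrev TranslationQuotient : Type := P6 ⧸ translationClosure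

theorem P6x_pow_six : P6x ^ 6 = 1 := by
  rw [P6x, PresentedGroup.of, ← map_pow]
  exact PresentedGroup.one_of_mem (by simp [relsP6])

/-- `x ↦ 1`, `y ↦ 2` kills the relators since `6 • 1 = 3 • 2 = 2 • (1 + 2) = 0` in `ℤ/6`. -/
def toZMod6 : P6 →* Multiplicative (ZMod 6) :=
  PresentedGroup.toGroup (f := ![.ofAdd 1, .ofAdd 2]) <| by
    rintro r (rfl | rfl | rfl) <;> decide

@[simp] theorem toZMod6_P6x : toZMod6 P6x = .ofAdd 1 := PresentedGroup.toGroup.of _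

@[simp] theorem toZMod6_P6y : toZMod6 P6y = .ofAdd 2 := PresentedGroup.toGroup.of _

theorem translationClosure_le_ker : translationClosure ≤ toZMod6.ker := by
  refine normalClosure_le_normal ?_
  rintro t (rfl | rfl) <;> simp only [SetLike.mem_coe, MonoidHom.mem_ker, map_mul, map_inv,
    toZMod6_P6x, toZMod6_P6y] <;> decide

theorem mk_P6y : (P6y : TranslationQuotient) = (P6x : TranslationQuotient) ^ 2 := by
  rw [sq, ← QuotientGroup.mk_mul, QuotientGroup.eq_iff_div_mem, div_eq_mul_inv]
  exact subset_normalClosure (Set.mem_insert _ _)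

theorem mem_zpowers_mk_P6x (q : TranslationQuotient) :
    q ∈ zpowers (P6x : TranslationQuotient) := by
  induction q using QuotientGroup.induction_on with
  | H g =>
    refine PresentedGroup.generated_by _ ((zpowers _).comap (QuotientGroup.mk' _)) ?_ g
    intro i
    fin_cases i
    · exact mem_zpowers _
    · show (P6y : TranslationQuotient) ∈ zpowers (P6x : TranslationQuotient)
      exact mk_P6y ▸ pow_mem (mem_zpowers _) 2

theorem orderOf_mk_P6x : orderOf (P6x : TranslationQuotient) = 6 := by
  refine Nat.dvd_antisymm (orderOf_dvd_of_pow_eq_one ?_) ?_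
  · rw [← QuotientGroup.mk_pow, P6x_pow_six, QuotientGroup.mk_one]
  · have := orderOf_map_dvd (QuotientGroup.lift _ toZMod6 translationClosure_le_ker)
      (P6x : TranslationQuotient)
    rwa [QuotientGroup.lift_mk, toZMod6_P6x, orderOf_ofAdd_eq_addOrderOf,
      ZMod.addOrderOf_one] at this

end P6

/-- The quotient of `P₆` by the normal closure of its translation subgroup,
generated by `t₁ = y x⁻²` and `t₂ = y⁻¹ x²`, is `ℤ/6ℤ`. -/
theorem stmt10 :
    Nonempty
      ((P6 ⧸ Subgroup.normalClosure
          ({P6y * (P6x * P6x)⁻¹, P6y⁻¹ * (P6x * P6x)} : Set P6))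
        ≃* Multiplicative (ZMod 6)) := by
  have : IsCyclic P6.TranslationQuotient := ⟨_, P6.mem_zpowers_mk_P6x⟩
  refine ⟨mulEquivOfCyclicCardEq ?_⟩
  rw [← orderOf_eq_card_of_forall_mem_zpowers P6.mem_zpowers_mk_P6x, P6.orderOf_mk_P6x,
    Nat.card_eq_fintype_card, Fintype.card_multiplicative, ZMod.card]
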